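/- arXiv:2101.12116 — 7 statements merged into one kernel-verified Lean document; each statement's English description precedes it below -/
import Mathlib

section
/- Let t : ℤ → ℤ be the translation z ↦ z + 1, viewed as a permutation of ℤ. The subgroup of Sym(ℤ) generated by the 3-cycle (0 1 2) together with the element (0 1)·t (the transposition swapping 0 and 1 followed by translation) contains every 3-cycle of the form (0, 1, k+1) for every positive integer k. -/
lemma swap_eval_aux (m : ℤ) (hm : 2 ≤ m) :
    Equiv.swap (0 : ℤ) (m + 1) * Equiv.swap 0 1 =
      (Equiv.swap (0 : ℤ) 2 * Equiv.swap 0 1) *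
        (Equiv.swap (2 : ℤ) (m + 1) * Equiv.swap 2 1) := by
  have e : ∀ a b x : ℤ, x ≠ a → x ≠ b → Equiv.swap a b x = x :=
    fun _ _ _ => Equiv.swap_apply_of_ne_of_ne
  ext x
  simp only [Equiv.Perm.mul_apply]
  rcases eq_or_ne x 0 with rfl | h0
  · rw [Equiv.swap_apply_left, e 0 (m+1) 1 one_ne_zero (by omega),
      e 2 1 0 (by omega) (by omega), e 2 (m+1) 0 (by omega) (by omega),
      Equiv.swap_apply_left, e 0 2 1 one_ne_zero (by omega)]
  rcases eq_or_ne x 1 with rfl | h1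
  · rw [Equiv.swap_apply_right, Equiv.swap_apply_left, Equiv.swap_apply_right,
      Equiv.swap_apply_left, e 0 1 (m+1) (by omega) (by omega),
      e 0 2 (m+1) (by omega) (by omega)]
  rcases eq_or_ne x 2 with rfl | h2
  · rw [e 0 1 2 (by omega) (by omega), e 0 (m+1) 2 (by omega) (by omega),
      Equiv.swap_apply_left, e 2 (m+1) 1 (by omega) (by omega),
      Equiv.swap_apply_right, Equiv.swap_apply_left]
  rcases eq_or_ne x (m+1) with rfl | hm1
  · rw [e 0 1 (m+1) (by omega) (by omega), Equiv.swap_apply_right,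
      e 2 1 (m+1) (by omega) (by omega), Equiv.swap_apply_right,
      e 0 1 2 (by omega) (by omega), Equiv.swap_apply_right]
  · rw [e 0 1 x h0 h1, e 0 (m+1) x h0 hm1, e 2 1 x h2 h1, e 2 (m+1) x h2 hm1,
      e 0 1 x h0 h1, e 0 2 x h0 h2]

lemma key_eq (m : ℤ) (hm : 2 ≤ m) :
    Equiv.swap (0 : ℤ) (m + 1) * Equiv.swap 0 1 =
      (Equiv.swap (0 : ℤ) 2 * Equiv.swap 0 1) *
        ((Equiv.addRight (1 : ℤ) * Equiv.swap 0 1) *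
          (Equiv.swap (0 : ℤ) m * Equiv.swap 0 1) *
          (Equiv.addRight (1 : ℤ) * Equiv.swap 0 1)⁻¹) := by
  set τ : Equiv.Perm ℤ := Equiv.addRight (1 : ℤ) * Equiv.swap 0 1 with hτ
  have ht0 : τ 0 = 2 := by simp [hτ, Equiv.Perm.mul_apply]
  have ht1 : τ 1 = 1 := by simp [hτ, Equiv.Perm.mul_apply]
  have htm : τ m = m + 1 := by
    simp [hτ, Equiv.Perm.mul_apply,
      Equiv.swap_apply_of_ne_of_ne (by omega : m ≠ 0) (by omega : m ≠ 1)]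
  have hconj : τ * (Equiv.swap (0 : ℤ) m * Equiv.swap 0 1) * τ⁻¹ =
      Equiv.swap (2 : ℤ) (m + 1) * Equiv.swap 2 1 := by
    have h : τ * (Equiv.swap (0 : ℤ) m * Equiv.swap 0 1) * τ⁻¹ =
        (τ * Equiv.swap (0 : ℤ) m * τ⁻¹) * (τ * Equiv.swap (0 : ℤ) 1 * τ⁻¹) := by
      group
    rw [h, ← Equiv.swap_apply_apply, ← Equiv.swap_apply_apply, ht0, ht1, htm]
  rw [hconj]
  exact swap_eval_aux m hm

/-- Let `t : ℤ → ℤ` be `z ↦ z + 1`, let `σ = (0 1 2)` be the 3-cycle `0↦1↦2↦0`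
(written as `swap 0 2 * swap 0 1`), and let `τ` be the transposition `(0 1)` followed
by `t` (i.e. `t ∘ (swap 0 1)`). Then the subgroup `⟨σ, τ⟩` of `Sym(ℤ)` contains the
3-cycle `(0, 1, k+1)` (sending `0↦1↦k+1↦0`) for every positive integer `k`. -/
theorem threeCycles_mem_closure (k : ℕ) (hk : 0 < k) :
    Equiv.swap (0 : ℤ) ((k : ℤ) + 1) * Equiv.swap 0 1 ∈
      Subgroup.closure {Equiv.swap (0 : ℤ) 2 * Equiv.swap 0 1,
        Equiv.addRight (1 : ℤ) * Equiv.swap 0 1} := by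
  have hσ : Equiv.swap (0 : ℤ) 2 * Equiv.swap 0 1 ∈
      Subgroup.closure {Equiv.swap (0 : ℤ) 2 * Equiv.swap 0 1,
        Equiv.addRight (1 : ℤ) * Equiv.swap 0 1} :=
    Subgroup.subset_closure (Or.inl rfl)
  have hτ : Equiv.addRight (1 : ℤ) * Equiv.swap 0 1 ∈
      Subgroup.closure {Equiv.swap (0 : ℤ) 2 * Equiv.swap 0 1,
        Equiv.addRight (1 : ℤ) * Equiv.swap 0 1} :=
    Subgroup.subset_closure (Or.inr rfl)
  induction k with
  | zero => omega
  | succ n ih =>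
    rcases Nat.eq_zero_or_pos n with h | h
    · subst h
      norm_num
      exact hσ
    · have hm : (2 : ℤ) ≤ (n : ℤ) + 1 := by exact_mod_cast by omega
      have hcast : ((n + 1 : ℕ) : ℤ) + 1 = ((n : ℤ) + 1) + 1 := by push_cast; ring
      rw [hcast, key_eq _ hm]
      exact mul_mem hσ (mul_mem (mul_mem hτ (ih h)) (inv_mem hτ))
end

section
/- Let t : ℤ → ℤ be the translation z ↦ z + 1. The subgroup of Sym(ℤ) generated by the 3-cycle (0 1 2) and the permutation (0 1)·t contains the group Alt(ℤ) of all even finitary permutations of ℤ. -/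
/-- The group of finitary permutations of `X`: those with finite support. -/
def FSym (X : Type*) : Subgroup (Equiv.Perm X) where
  carrier := {g | {x | g x ≠ x}.Finite}
  one_mem' := by simp
  mul_mem' := by
    intro a b ha hb
    refine (Set.Finite.union ha hb).subset fun x hx => ?_
    simp only [Set.mem_setOf_eq, Set.mem_union, Equiv.Perm.mul_apply] at hx ⊢
    by_cases h : b x = x
    · left; rwa [h] at hx
    · right; exact h
  inv_mem' := by
    intro a ha
    refine ha.subset fun x hx => ?_
    simp only [Set.mem_setOf_eq] at hx ⊢
    intro h
    exact hx (Equiv.Perm.inv_eq_iff_eq.mpr h.symm)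

/-- A permutation is even (finitary) if it is a product of an even number of transpositions. -/
def IsEvenPerm {X : Type*} [DecidableEq X] (g : Equiv.Perm X) : Prop :=
  ∃ l : List (Equiv.Perm X), (∀ τ ∈ l, τ.IsSwap) ∧ Even l.length ∧ g = l.prod

/-- A permutation is odd (finitary) if it is a product of an odd number of transpositions. -/
def IsOddPerm {X : Type*} [DecidableEq X] (g : Equiv.Perm X) : Prop :=
  ∃ l : List (Equiv.Perm X), (∀ τ ∈ l, τ.IsSwap) ∧ Odd l.length ∧ g = l.prod

/-- `Alt(X)`: the group of even finitary permutations of `X`. -/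
def AltGroup (X : Type*) [DecidableEq X] : Subgroup (Equiv.Perm X) where
  carrier := {g | IsEvenPerm g}
  one_mem' := ⟨[], by simp, by simp, by simp⟩
  mul_mem' := by
    rintro a b ⟨l₁, hs₁, he₁, hp₁⟩ ⟨l₂, hs₂, he₂, hp₂⟩
    refine ⟨l₁ ++ l₂, ?_, by simpa using he₁.add he₂, by rw [hp₁, hp₂, List.prod_append]⟩
    intro τ hτ
    rcases List.mem_append.mp hτ with h | h
    exacts [hs₁ τ h, hs₂ τ h]
  inv_mem' := by
    rintro a ⟨l, hs, he, hp⟩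
    refine ⟨(l.map fun x => x⁻¹).reverse, ?_, by simpa using he, ?_⟩
    · intro τ hτ
      simp only [List.mem_reverse, List.mem_map] at hτ
      obtain ⟨σ, hσ, rfl⟩ := hτ
      obtain ⟨x, y, hxy, rfl⟩ := hs σ hσ
      exact ⟨x, y, hxy, by simp⟩
    · rw [hp, List.prod_inv_reverse]

/-!
Let `H = ⟨σ, τ⟩` with `σ = (0 2)(0 1)` and write `s = (0 1)`. A product of two transpositions is
`((a b)·s)·((c d)·s)⁻¹`, so it suffices that `(a b)·s ∈ H` for all `a ≠ b`; since
`(a b) = (1 a)(1 b)(1 a)`, the transpositions `(1 m)` suffice. The coset `H·s` is stable under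
conjugation by `τ^{±1}` because `s τ s = σ τ ∈ H`, and `τ` fixes `1` and acts as `t` off `{0, 1}`.
So conjugating `(1 2)·s = σ⁻¹` and `(1 0)·s = 1` by powers of `τ` reaches every `(1 m)·s`.
-/

open Equiv Equiv.Perm

theorem Subgroup.conj_mul_mem_of_mul_mem {G : Type*} [Group G] {H : Subgroup G} {s u g : G}
    (hu : u ∈ H) (hsu : s⁻¹ * u * s ∈ H) (hg : g * s ∈ H) : u * g * u⁻¹ * s ∈ H := by
  have h : u * g * u⁻¹ * s = u * (g * s) * (s⁻¹ * u * s)⁻¹ := by group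
  rw [h]
  exact H.mul_mem (H.mul_mem hu hg) (H.inv_mem hsu)

theorem Subgroup.list_prod_mem_of_forall_mul_mem {G : Type*} [Group G] {H : Subgroup G}
    {S : Set G} {s : G} (hinv : ∀ g ∈ S, g⁻¹ ∈ S) (hS : ∀ g ∈ S, g * s ∈ H) :
    ∀ l : List G, (∀ g ∈ l, g ∈ S) →
      (Even l.length → l.prod ∈ H) ∧ (Odd l.length → s⁻¹ * l.prod ∈ H)
  | [], _ => ⟨fun _ => H.one_mem, fun h => absurd h (by simp)⟩
  | g :: l, hl => by
    have hgS : g ∈ S := hl g List.mem_cons_self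
    obtain ⟨heven, hodd⟩ :=
      list_prod_mem_of_forall_mul_mem hinv hS l fun x hx => hl x (List.mem_cons_of_mem g hx)
    simp only [List.length_cons, List.prod_cons, Nat.even_add_one, Nat.odd_add_one,
      Nat.not_even_iff_odd, Nat.not_odd_iff_even]
    refine ⟨fun h => ?_, fun h => ?_⟩
    · have e : g * l.prod = g * s * (s⁻¹ * l.prod) := by group
      exact e ▸ H.mul_mem (hS g hgS) (hodd h)
    · have e : s⁻¹ * (g * l.prod) = (g⁻¹ * s)⁻¹ * l.prod := by group
      exact e ▸ H.mul_mem (H.inv_mem (hS _ (hinv g hgS))) (heven h)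

theorem swap_apply_mul_mem_of_swap_mul_mem {α : Type*} [DecidableEq α] {H : Subgroup (Perm α)}
    {s u : Perm α} (hu : u ∈ H) (hsu : s⁻¹ * u * s ∈ H) {a b : α} (h : swap a b * s ∈ H) :
    swap (u a) (u b) * s ∈ H := by
  rw [swap_apply_apply]
  exact Subgroup.conj_mul_mem_of_mul_mem hu hsu h

theorem altGroup_le_of_forall_swap_mul_mem {α : Type*} [DecidableEq α] {H : Subgroup (Perm α)}
    {s : Perm α} (hH : ∀ a b, a ≠ b → swap a b * s ∈ H) : AltGroup α ≤ H := by
  rintro _ ⟨l, hl, heven, rfl⟩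
  refine (Subgroup.list_prod_mem_of_forall_mul_mem (S := {g : Perm α | g.IsSwap}) (s := s)
    ?_ ?_ l hl).1 heven
  · rintro _ ⟨a, b, hab, rfl⟩
    exact ⟨a, b, hab, swap_inv a b⟩
  · rintro _ ⟨a, b, hab, rfl⟩
    exact hH a b hab

theorem swap_mul_mem_of_forall_swap_pivot_mul_mem {α : Type*} [DecidableEq α]
    {H : Subgroup (Perm α)} {s : Perm α} (c : α) (hc : ∀ x, x ≠ c → swap c x * s ∈ H)
    (a b : α) (hab : a ≠ b) : swap a b * s ∈ H := by
  by_cases ha : a = c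
  · exact ha ▸ hc b (ha ▸ hab.symm)
  by_cases hb : b = c
  · rw [hb, swap_comm]
    exact hc a ha
  have hconj : swap a b = swap c a * swap c b * (swap c a)⁻¹ := by
    rw [← swap_apply_apply, swap_apply_left, swap_apply_of_ne_of_ne hb (Ne.symm hab)]
  have e : swap a b * s = swap c a * s * (swap c b * s)⁻¹ * (swap c a * s) := by
    simp only [hconj, mul_inv_rev, swap_inv]
    group
  rw [e]
  exact H.mul_mem (H.mul_mem (hc a ha) (H.inv_mem (hc b hb))) (hc a ha)

namespace SigmaTau

local notation "s" => swap (0 : ℤ) 1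
local notation "σ" => swap (0 : ℤ) 2 * swap 0 1
local notation "τ" => (Equiv.addRight (1 : ℤ) * swap 0 1 : Perm ℤ)
local notation "H" => Subgroup.closure {σ, τ}

theorem sigma_mem : σ ∈ H := Subgroup.subset_closure (Set.mem_insert _ _)

theorem tau_mem : τ ∈ H := Subgroup.subset_closure (Set.mem_insert_of_mem _ rfl)

theorem swap_mul_tau_mul_swap : s * τ * s = σ * τ := by
  ext x
  simp only [Perm.mul_apply, swap_apply_def, coe_addRight]
  split_ifs <;> omega

theorem tau_apply_one : τ 1 = 1 := by
  simp

theorem tau_apply_of_ne {m : ℤ} (h0 : m ≠ 0) (h1 : m ≠ 1) : τ m = m + 1 := by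
  simp [swap_apply_of_ne_of_ne h0 h1]

theorem swap_one_two_mul_swap : swap 1 2 * s = σ⁻¹ := by
  rw [mul_inv_rev, swap_inv, swap_inv]
  ext x
  simp only [Perm.mul_apply, swap_apply_def]
  split_ifs <;> omega

theorem swap_inv_mul_tau_mul_swap_mem : s⁻¹ * τ * s ∈ H := by
  rw [swap_inv, swap_mul_tau_mul_swap]
  exact Subgroup.mul_mem _ sigma_mem tau_mem

theorem swap_one_mul_swap_mem_of_two_le {m : ℤ} (hm : 2 ≤ m) : swap 1 m * s ∈ H := by
  induction m, hm using Int.leInduction with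
  | base => exact swap_one_two_mul_swap ▸ Subgroup.inv_mem _ sigma_mem
  | succ n hn ih =>
    have h := swap_apply_mul_mem_of_swap_mul_mem tau_mem swap_inv_mul_tau_mul_swap_mem ih
    rwa [tau_apply_one, tau_apply_of_ne (by omega) (by omega)] at h

theorem swap_one_mul_swap_mem_of_nonpos {m : ℤ} (hm : m ≤ 0) : swap 1 m * s ∈ H := by
  induction m, hm using Int.leInductionDown with
  | base => simp only [swap_comm, swap_mul_self, Subgroup.one_mem]
  | pred n hn ih =>
    have hsu : s⁻¹ * τ⁻¹ * s ∈ H := by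
      simpa only [mul_inv_rev, inv_inv, mul_assoc] using
        Subgroup.inv_mem _ swap_inv_mul_tau_mul_swap_mem
    have h := swap_apply_mul_mem_of_swap_mul_mem (Subgroup.inv_mem _ tau_mem) hsu ih
    have hn' : τ⁻¹ n = n - 1 := by
      rw [inv_eq_iff_eq, tau_apply_of_ne (by omega) (by omega), sub_add_cancel]
    rwa [inv_eq_iff_eq.mpr tau_apply_one.symm, hn'] at h

theorem swap_one_mul_swap_mem {m : ℤ} (hm : m ≠ 1) : swap 1 m * s ∈ H := by
  rcases le_or_gt m 0 with h | h
  · exact swap_one_mul_swap_mem_of_nonpos h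
  · exact swap_one_mul_swap_mem_of_two_le (by omega)

end SigmaTau

/-- Let `t : ℤ → ℤ` be `z ↦ z + 1`, `σ = (0 1 2)` the 3-cycle `0↦1↦2↦0`, and
`τ = (0 1)·t` (the transposition `(0 1)` followed by the translation `t`). Then the
subgroup of `Sym(ℤ)` generated by `σ` and `τ` contains `Alt(ℤ)`, the group of all
even finitary permutations of `ℤ`. -/
theorem alt_le_closure :
    AltGroup ℤ ≤
      Subgroup.closure {Equiv.swap (0 : ℤ) 2 * Equiv.swap 0 1,
        Equiv.addRight (1 : ℤ) * Equiv.swap 0 1} :=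
  altGroup_le_of_forall_swap_mul_mem <|
    swap_mul_mem_of_forall_swap_pivot_mul_mem 1 fun _ => SigmaTau.swap_one_mul_swap_mem
end

section
/- Let X be an infinite set and G a group with Alt(X) ≤ G ≤ Sym(X). Then Alt(X) is contained in every nontrivial normal subgroup of G; that is, Alt(X) is the unique minimal normal subgroup of G. -/
open Equiv Equiv.Perm in
/-- `permCongr` as a `MulEquiv`. -/
def permMulEquiv {α β : Type*} (e : α ≃ β) : Equiv.Perm α ≃* Equiv.Perm β :=
  { e.permCongr with
    map_mul' := fun p q => by ext x; simp [Equiv.Perm.mul_apply] }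

open Equiv Equiv.Perm in
@[simp] theorem permMulEquiv_apply {α β : Type*} (e : α ≃ β) (π : Equiv.Perm α) :
    permMulEquiv e π = e.permCongr π := rfl

open Equiv Equiv.Perm in
theorem sign_permMulEquiv {α β : Type*} [DecidableEq α] [Fintype α] [DecidableEq β] [Fintype β]
    (e : α ≃ β) (π : Equiv.Perm α) :
    Equiv.Perm.sign (permMulEquiv e π) = Equiv.Perm.sign π := by
  rw [permMulEquiv_apply, sign_permCongr]

open Equiv Equiv.Perm in
theorem simpleAltF {X : Type*} [DecidableEq X] (F : Finset X) (hF : F.card = 5) :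
    IsSimpleGroup (alternatingGroup {x // x ∈ F}) := by
  have e : Fin 5 ≃ {x // x ∈ F} := (F.equivFinOfCardEq hF).symm
  set E := permMulEquiv e with hE
  have hmap : (alternatingGroup (Fin 5)).map E.toMonoidHom = alternatingGroup {x // x ∈ F} := by
    ext g
    simp only [Subgroup.mem_map, mem_alternatingGroup]
    have hsign : ∀ π : Equiv.Perm (Fin 5), Equiv.Perm.sign (E π) = Equiv.Perm.sign π :=
      fun π => sign_permMulEquiv e π
    constructor
    · rintro ⟨π, hπ, rfl⟩
      rw [show E.toMonoidHom π = E π from rfl, hsign]; exact hπ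
    · intro hg
      refine ⟨E.symm g, ?_, E.apply_symm_apply g⟩
      have h2 := hsign (E.symm g)
      rw [E.apply_symm_apply] at h2
      rw [← h2]; exact hg
  have altE : alternatingGroup (Fin 5) ≃* alternatingGroup {x // x ∈ F} :=
    (E.subgroupMap _).trans (MulEquiv.subgroupCongr hmap)
  haveI : Nontrivial (alternatingGroup {x // x ∈ F}) := altE.injective.nontrivial
  exact IsSimpleGroup.isSimpleGroup_of_surjective altE.toMonoidHom altE.surjective

open Equiv Equiv.Perm in
/-- An even permutation of a finite subtype extends to an element of `AltGroup X`. -/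
theorem ofSubtype_mem_altGroup {X : Type*} [DecidableEq X] {p : X → Prop} [DecidablePred p]
    [Fintype (Subtype p)] (π : Equiv.Perm (Subtype p)) (h : Equiv.Perm.sign π = 1) :
    Equiv.Perm.ofSubtype π ∈ AltGroup X := by
  obtain ⟨l, hprod, hswap⟩ := (Equiv.Perm.truncSwapFactors π).out
  have hlen : Even l.length := by
    rw [← hprod, Equiv.Perm.sign_prod_list_swap hswap] at h
    exact (neg_one_pow_eq_one_iff_even (by decide)).mp h
  refine ⟨l.map Equiv.Perm.ofSubtype, ?_, by simpa using hlen, ?_⟩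
  · intro τ hτ
    simp only [List.mem_map] at hτ
    obtain ⟨σ, hσ, rfl⟩ := hτ
    obtain ⟨x, y, hxy, rfl⟩ := hswap σ hσ
    exact ⟨↑x, ↑y, fun hc => hxy (Subtype.coe_injective hc),
      Equiv.Perm.ofSubtype_swap_eq x y⟩
  · rw [← hprod, map_list_prod]

open Equiv Equiv.Perm in
/-- Core step: if `N` contains a nontrivial even permutation supported in a 5-element
set `F`, then it contains every even permutation supported in `F`. -/
theorem key_five {X : Type*} [DecidableEq X]
    (G N : Subgroup (Equiv.Perm X)) (hG : AltGroup X ≤ G)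
    (hnorm : ∀ g ∈ G, ∀ x ∈ N, g * x * g⁻¹ ∈ N)
    (F : Finset X) (hF : F.card = 5)
    (ρ : Equiv.Perm {x // x ∈ F}) (hρ1 : ρ ≠ 1) (hρs : Equiv.Perm.sign ρ = 1)
    (hρN : Equiv.Perm.ofSubtype ρ ∈ N)
    (π : Equiv.Perm {x // x ∈ F}) (hπ : Equiv.Perm.sign π = 1) :
    Equiv.Perm.ofSubtype π ∈ N := by
  haveI := simpleAltF F hF
  set A := alternatingGroup {x // x ∈ F} with hA
  set K : Subgroup A :=
    (N.comap (Equiv.Perm.ofSubtype : Equiv.Perm {x // x ∈ F} →* Equiv.Perm X)).subgroupOf A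
    with hK
  have hnormal : K.Normal := by
    constructor
    intro n hn g
    rw [hK, Subgroup.mem_subgroupOf, Subgroup.mem_comap] at hn ⊢
    have hcoe : ((g * n * g⁻¹ : A) : Equiv.Perm {x // x ∈ F}) = ↑g * ↑n * (↑g)⁻¹ := rfl
    rw [hcoe, map_mul, map_mul, map_inv]
    exact hnorm _ (hG (ofSubtype_mem_altGroup _ (mem_alternatingGroup.mp g.2))) _ hn
  have hne : K ≠ ⊥ := by
    rw [Subgroup.ne_bot_iff_exists_ne_one]
    refine ⟨⟨⟨ρ, mem_alternatingGroup.mpr hρs⟩, ?_⟩, ?_⟩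
    · rw [hK, Subgroup.mem_subgroupOf, Subgroup.mem_comap]; exact hρN
    · intro hc
      apply hρ1
      simpa [Subtype.ext_iff] using hc
  have htop : K = ⊤ := (hnormal.eq_bot_or_eq_top).resolve_left hne
  have hπK : (⟨π, mem_alternatingGroup.mpr hπ⟩ : A) ∈ K := htop ▸ Subgroup.mem_top _
  rw [hK, Subgroup.mem_subgroupOf, Subgroup.mem_comap] at hπK
  exact hπK

theorem card_quint_le {α : Type*} [DecidableEq α] (a b c d e : α) :
    ({a, b, c, d, e} : Finset α).card ≤ 5 := by
  have h1 := Finset.card_insert_le a ({b, c, d, e} : Finset α)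
  have h2 := Finset.card_insert_le b ({c, d, e} : Finset α)
  have h3 := Finset.card_insert_le c ({d, e} : Finset α)
  have h4 := Finset.card_insert_le d ({e} : Finset α)
  have h5 : ({e} : Finset α).card = 1 := Finset.card_singleton e
  omega

open Equiv Equiv.Perm in
/-- Transfer step: from a 3-cycle in `N` we get any product of two swaps whose points,
together with the 3-cycle's points, fit in a 5-element set. -/
theorem swap_step {X : Type*} [Infinite X] [DecidableEq X]
    (G N : Subgroup (Equiv.Perm X)) (hG : AltGroup X ≤ G)
    (hnorm : ∀ g ∈ G, ∀ x ∈ N, g * x * g⁻¹ ∈ N)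
    (u v w : X) (huv : u ≠ v) (huw : u ≠ w) (hvw : v ≠ w)
    (h3 : Equiv.swap u w * Equiv.swap u v ∈ N)
    (x y z t : X) (hxy : x ≠ y) (hzt : z ≠ t)
    (hcard : ({u, v, w, x, y, z, t} : Finset X).card ≤ 5) :
    Equiv.swap x y * Equiv.swap z t ∈ N := by
  obtain ⟨F, hsub, hFcard⟩ :=
    Infinite.exists_superset_card_eq ({u, v, w, x, y, z, t} : Finset X) 5 hcard
  have hu : u ∈ F := hsub (by simp)
  have hv : v ∈ F := hsub (by simp)
  have hw : w ∈ F := hsub (by simp)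
  have hx : x ∈ F := hsub (by simp)
  have hy : y ∈ F := hsub (by simp)
  have hz : z ∈ F := hsub (by simp)
  have ht : t ∈ F := hsub (by simp)
  set U : {a // a ∈ F} := ⟨u, hu⟩
  set V : {a // a ∈ F} := ⟨v, hv⟩
  set W : {a // a ∈ F} := ⟨w, hw⟩
  have hUV : U ≠ V := fun hc => huv (congrArg Subtype.val hc)
  have hUW : U ≠ W := fun hc => huw (congrArg Subtype.val hc)
  have hVW : V ≠ W := fun hc => hvw (congrArg Subtype.val hc)
  have hXY : (⟨x, hx⟩ : {a // a ∈ F}) ≠ ⟨y, hy⟩ := fun hc => hxy (congrArg Subtype.val hc)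
  have hZT : (⟨z, hz⟩ : {a // a ∈ F}) ≠ ⟨t, ht⟩ := fun hc => hzt (congrArg Subtype.val hc)
  have hmain := key_five G N hG hnorm F hFcard
    (Equiv.swap U W * Equiv.swap U V)
    (by
      intro hone
      have h2 : (Equiv.swap U W * Equiv.swap U V) U = U := by rw [hone]; rfl
      rw [Equiv.Perm.mul_apply, Equiv.swap_apply_left,
        Equiv.swap_apply_of_ne_of_ne hUV.symm hVW] at h2
      exact hUV h2.symm)
    (by
      rw [map_mul, Equiv.Perm.sign_swap hUW, Equiv.Perm.sign_swap hUV]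
      norm_num)
    (by
      rw [map_mul, Equiv.Perm.ofSubtype_swap_eq, Equiv.Perm.ofSubtype_swap_eq]
      exact h3)
    (Equiv.swap ⟨x, hx⟩ ⟨y, hy⟩ * Equiv.swap ⟨z, hz⟩ ⟨t, ht⟩)
    (by
      rw [map_mul, Equiv.Perm.sign_swap hXY, Equiv.Perm.sign_swap hZT]
      norm_num)
  rwa [map_mul, Equiv.Perm.ofSubtype_swap_eq, Equiv.Perm.ofSubtype_swap_eq] at hmain

open Equiv Equiv.Perm in
theorem pair_all {X : Type*} [Infinite X] [DecidableEq X]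
    (G N : Subgroup (Equiv.Perm X)) (hG : AltGroup X ≤ G)
    (hnorm : ∀ g ∈ G, ∀ x ∈ N, g * x * g⁻¹ ∈ N)
    (u v w : X) (huv : u ≠ v) (huw : u ≠ w) (hvw : v ≠ w)
    (h3 : Equiv.swap u w * Equiv.swap u v ∈ N)
    (x y z t : X) (hxy : x ≠ y) (hzt : z ≠ t) :
    Equiv.swap x y * Equiv.swap z t ∈ N := by
  obtain ⟨F₁, hsub₁, hF₁⟩ :=
    Infinite.exists_superset_card_eq ({u, v, w, x, y} : Finset X) 5 (card_quint_le u v w x y)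
  have hxF : x ∈ F₁ := hsub₁ (by simp)
  have hyF : y ∈ F₁ := hsub₁ (by simp)
  have hsd : (F₁ \ {x, y}).Nonempty := by
    rw [← Finset.card_pos]
    have h1 := Finset.le_card_sdiff ({x, y} : Finset X) F₁
    have h2 := Finset.card_insert_le x ({y} : Finset X)
    have h3 : ({y} : Finset X).card = 1 := Finset.card_singleton y
    omega
  obtain ⟨s, hs⟩ := hsd
  rw [Finset.mem_sdiff, Finset.mem_insert, Finset.mem_singleton] at hs
  obtain ⟨hsF, hsxy⟩ := hs
  push_neg at hsxy
  obtain ⟨hsx, hsy⟩ := hsxy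
  -- Step 1: get the 3-cycle `swap x s * swap x y ∈ N`.
  have hstep1 : Equiv.swap x s * Equiv.swap x y ∈ N := by
    refine swap_step G N hG hnorm u v w huv huw hvw h3 x s x y (Ne.symm hsx) hxy ?_
    refine le_trans (Finset.card_le_card ?_) hF₁.le
    intro a haa
    simp only [Finset.mem_insert, Finset.mem_singleton] at haa
    rcases haa with rfl | rfl | rfl | rfl | rfl | rfl | rfl
    · exact hsub₁ (by simp)
    · exact hsub₁ (by simp)
    · exact hsub₁ (by simp)
    · exact hxF
    · exact hsF
    · exact hxF
    · exact hyF
  -- Step 2: use this 3-cycle to get the target.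
  refine swap_step G N hG hnorm x y s hxy (Ne.symm hsx) (Ne.symm hsy) hstep1 x y z t hxy hzt ?_
  have hsub2 : ({x, y, s, x, y, z, t} : Finset X) ⊆ ({x, y, s, z, t} : Finset X) := by
    intro a haa
    simp only [Finset.mem_insert, Finset.mem_singleton] at haa ⊢
    tauto
  exact le_trans (Finset.card_le_card hsub2) (card_quint_le x y s z t)

theorem prod_mem_of_pairs {M : Type*} [Group M] (N : Subgroup M) (P : M → Prop)
    (hpair : ∀ a b, P a → P b → a * b ∈ N) :
    ∀ l : List M, (∀ τ ∈ l, P τ) → Even l.length → l.prod ∈ N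
  | [] => fun _ _ => N.one_mem
  | [a] => fun _ h => by simp at h
  | a :: b :: l => fun hl h => by
    rw [List.prod_cons, List.prod_cons, ← mul_assoc]
    refine N.mul_mem (hpair a b (hl a (by simp)) (hl b (by simp)))
      (prod_mem_of_pairs N P hpair l (fun τ hτ => hl τ (by simp [hτ])) ?_)
    rcases h with ⟨k, hk⟩
    simp only [List.length_cons] at hk
    exact ⟨k - 1, by omega⟩

/-- Let `X` be an infinite set and `G` a group with `Alt(X) ≤ G ≤ Sym(X)`. Then
`Alt(X)` is contained in every nontrivial normal subgroup of `G`; that is, `Alt(X)`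
is the unique minimal normal subgroup of `G`. -/
theorem alt_le_of_normal (X : Type*) [Infinite X] [DecidableEq X]
    (G : Subgroup (Equiv.Perm X)) (hG : AltGroup X ≤ G)
    (N : Subgroup (Equiv.Perm X)) (hNG : N ≤ G)
    (hnorm : ∀ g ∈ G, ∀ x ∈ N, g * x * g⁻¹ ∈ N) (hN : N ≠ ⊥) :
    AltGroup X ≤ N := by
  classical
  -- Get a nontrivial element of `N`.
  obtain ⟨⟨σ, hσN⟩, hσ1⟩ := Subgroup.ne_bot_iff_exists_ne_one.mp hN
  have hσ : σ ≠ 1 := by simpa [Subtype.ext_iff] using hσ1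
  obtain ⟨a, ha⟩ : ∃ a, σ a ≠ a := by
    by_contra h
    push_neg at h
    exact hσ (Equiv.ext fun x => (h x).trans (Equiv.Perm.one_apply x).symm)
  set b := σ a with hb
  have hab : a ≠ b := fun h => ha h.symm
  obtain ⟨c, hc⟩ := Infinite.exists_notMem_finset ({a, b, σ b} : Finset X)
  simp only [Finset.mem_insert, Finset.mem_singleton, not_or] at hc
  obtain ⟨hca, hcb, hcσb⟩ := hc
  have hbσb : b ≠ σ b := fun h => hab (σ.injective (hb ▸ h))
  have hbσc : b ≠ σ c := fun h => hca (σ.injective (hb ▸ h)).symm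
  -- The 3-cycle `t = (a b c)` and the commutator `σ t σ⁻¹ t⁻¹ ∈ N`.
  set t : Equiv.Perm X := Equiv.swap a c * Equiv.swap a b with ht
  have htAlt : t ∈ AltGroup X := by
    refine ⟨[Equiv.swap a c, Equiv.swap a b], ?_, by simp, by simp [ht]⟩
    intro τ hτ
    simp only [List.mem_cons, List.mem_singleton, List.not_mem_nil, or_false] at hτ
    rcases hτ with rfl | rfl
    · exact ⟨a, c, fun h => hca h.symm, rfl⟩
    · exact ⟨a, b, hab, rfl⟩
  have hcomm : σ * t * σ⁻¹ * t⁻¹ ∈ N := by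
    have h1 : t * σ⁻¹ * t⁻¹ ∈ N := hnorm t (hG htAlt) σ⁻¹ (N.inv_mem hσN)
    have h2 := N.mul_mem hσN h1
    have : σ * (t * σ⁻¹ * t⁻¹) = σ * t * σ⁻¹ * t⁻¹ := by group
    rwa [this] at h2
  have hexp : σ * t * σ⁻¹ * t⁻¹ =
      Equiv.swap b (σ c) * Equiv.swap b (σ b) * Equiv.swap a b * Equiv.swap a c := by
    have e1 : Equiv.swap b (σ c) = σ * Equiv.swap a c * σ⁻¹ := by
      rw [hb]; exact Equiv.swap_apply_apply σ a c
    have e2 : Equiv.swap b (σ b) = σ * Equiv.swap a b * σ⁻¹ := by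
      rw [hb]; exact Equiv.swap_apply_apply σ a b
    rw [e1, e2, ht]
    have hiac : (Equiv.swap a c)⁻¹ = Equiv.swap a c := Equiv.swap_inv a c
    have hiab : (Equiv.swap a b)⁻¹ = Equiv.swap a b := Equiv.swap_inv a b
    rw [mul_inv_rev, hiac, hiab]
    group
  -- The commutator moves `a`.
  have hmove : (Equiv.swap b (σ c) * Equiv.swap b (σ b) * Equiv.swap a b * Equiv.swap a c) a ≠ a := by
    have hstep : (Equiv.swap b (σ c) * Equiv.swap b (σ b) * Equiv.swap a b * Equiv.swap a c) a
        = Equiv.swap b (σ c) c := by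
      rw [Equiv.Perm.mul_apply, Equiv.Perm.mul_apply, Equiv.Perm.mul_apply,
        Equiv.swap_apply_left, Equiv.swap_apply_of_ne_of_ne hca hcb,
        Equiv.swap_apply_of_ne_of_ne hcb hcσb]
    rw [hstep]
    by_cases hccσ : σ c = c
    · rw [hccσ, Equiv.swap_apply_right]
      exact fun h => hab h.symm
    · rw [Equiv.swap_apply_of_ne_of_ne hcb (fun h => hccσ h.symm)]
      exact hca
  -- Find a 5-element superset of the support.
  obtain ⟨F, hsub, hFcard⟩ :=
    Infinite.exists_superset_card_eq ({a, b, c, σ b, σ c} : Finset X) 5 (card_quint_le _ _ _ _ _)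
  have hA : a ∈ F := hsub (by simp)
  have hB : b ∈ F := hsub (by simp)
  have hC : c ∈ F := hsub (by simp)
  have hSB : σ b ∈ F := hsub (by simp)
  have hSC : σ c ∈ F := hsub (by simp)
  set ρ : Equiv.Perm {x // x ∈ F} :=
    Equiv.swap ⟨b, hB⟩ ⟨σ c, hSC⟩ * Equiv.swap ⟨b, hB⟩ ⟨σ b, hSB⟩ *
      Equiv.swap ⟨a, hA⟩ ⟨b, hB⟩ * Equiv.swap ⟨a, hA⟩ ⟨c, hC⟩ with hρ
  have hρof : Equiv.Perm.ofSubtype ρ =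
      Equiv.swap b (σ c) * Equiv.swap b (σ b) * Equiv.swap a b * Equiv.swap a c := by
    rw [hρ, map_mul, map_mul, map_mul, Equiv.Perm.ofSubtype_swap_eq,
      Equiv.Perm.ofSubtype_swap_eq, Equiv.Perm.ofSubtype_swap_eq, Equiv.Perm.ofSubtype_swap_eq]
  have hBSC : (⟨b, hB⟩ : {x // x ∈ F}) ≠ ⟨σ c, hSC⟩ := fun h => hbσc (congrArg Subtype.val h)
  have hBSB : (⟨b, hB⟩ : {x // x ∈ F}) ≠ ⟨σ b, hSB⟩ := fun h => hbσb (congrArg Subtype.val h)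
  have hAB : (⟨a, hA⟩ : {x // x ∈ F}) ≠ ⟨b, hB⟩ := fun h => hab (congrArg Subtype.val h)
  have hAC : (⟨a, hA⟩ : {x // x ∈ F}) ≠ ⟨c, hC⟩ :=
    fun h => hca (congrArg Subtype.val h).symm
  -- The seed 3-cycle `(a b c) = swap a c * swap a b ∈ N`.
  have hseed := key_five G N hG hnorm F hFcard ρ
    (by
      intro hone
      apply hmove
      rw [← hρof, hone, map_one, Equiv.Perm.one_apply])
    (by
      rw [hρ, map_mul, map_mul, map_mul, Equiv.Perm.sign_swap hBSC,
        Equiv.Perm.sign_swap hBSB, Equiv.Perm.sign_swap hAB, Equiv.Perm.sign_swap hAC]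
      norm_num)
    (by rw [hρof, ← hexp]; exact hcomm)
    (Equiv.swap ⟨a, hA⟩ ⟨c, hC⟩ * Equiv.swap ⟨a, hA⟩ ⟨b, hB⟩)
    (by
      rw [map_mul, Equiv.Perm.sign_swap hAC, Equiv.Perm.sign_swap hAB]
      norm_num)
  rw [map_mul, Equiv.Perm.ofSubtype_swap_eq, Equiv.Perm.ofSubtype_swap_eq] at hseed
  -- Conclude.
  intro g hg
  obtain ⟨l, hsw, hev, hp⟩ := hg
  rw [hp]
  refine prod_mem_of_pairs N Equiv.Perm.IsSwap ?_ l hsw hev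
  intro s₁ s₂ h₁ h₂
  obtain ⟨x, y, hxy, rfl⟩ := h₁
  obtain ⟨z, w, hzw, rfl⟩ := h₂
  exact pair_all G N hG hnorm a b c hab (fun h => hca h.symm) (fun h => hcb h.symm)
    hseed x y z w hxy hzw
end

section
/- Let t ∈ Sym(ℤ) be the translation z ↦ z+1 and let k ≥ 3. The subgroup ⟨Alt(ℤ), t^k⟩ of Sym(ℤ) is generated by Alt({1, …, 2k}) ∪ {t^k}, where Alt({1,…,2k}) denotes the even finitary permutations supported on {1,…,2k}. -/
open Equiv

def threeCycleAt (x : ℤ) : Perm ℤ := swap x (x + 1) * swap (x + 1) (x + 2)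

theorem threeCycleAt_mem_altGroup (x : ℤ) : threeCycleAt x ∈ AltGroup ℤ := by
  refine ⟨[swap x (x + 1), swap (x + 1) (x + 2)], ?_, by simp, by simp [threeCycleAt]⟩
  simp only [List.mem_cons, List.not_mem_nil, or_false, forall_eq_or_imp, forall_eq]
  exact ⟨⟨_, _, by omega, rfl⟩, ⟨_, _, by omega, rfl⟩⟩

theorem mem_Icc_of_threeCycleAt_apply_ne {x y : ℤ} (hy : threeCycleAt x y ≠ y) :
    y ∈ Set.Icc x (x + 2) := by
  by_contra hxy
  simp only [Set.mem_Icc, not_and_or, not_le] at hxy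
  have h₁ : swap (x + 1) (x + 2) y = y := swap_apply_of_ne_of_ne (by omega) (by omega)
  rw [threeCycleAt, Perm.mul_apply, h₁, swap_apply_of_ne_of_ne] at hy <;> omega

theorem addRight_mul_threeCycleAt_mul_inv (c x : ℤ) :
    Equiv.addRight c * threeCycleAt x * (Equiv.addRight c)⁻¹ = threeCycleAt (x + c) := by
  have conj (a b : Perm ℤ) : Equiv.addRight c * (a * b) * (Equiv.addRight c)⁻¹ =
      (Equiv.addRight c * a * (Equiv.addRight c)⁻¹) *
        (Equiv.addRight c * b * (Equiv.addRight c)⁻¹) := by group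
  rw [threeCycleAt, conj, ← swap_apply_apply, ← swap_apply_apply]
  simp only [coe_addRight, threeCycleAt]
  ring_nf

theorem threeCycleAt_mul_swap_add_one_add_two (x : ℤ) (σ : Perm ℤ) :
    threeCycleAt x * (swap (x + 1) (x + 2) * σ) = swap x (x + 1) * σ := by
  rw [threeCycleAt, mul_assoc, swap_mul_self_mul]

theorem altGroup_le_of_swap_mul_swap_mem {α : Type*} [DecidableEq α] {H : Subgroup (Perm α)}
    (h : ∀ σ τ : Perm α, σ.IsSwap → τ.IsSwap → σ * τ ∈ H) : AltGroup α ≤ H := by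
  rintro _ ⟨l, hswap, heven, rfl⟩
  induction l using List.twoStepInduction with
  | nil => exact H.one_mem
  | singleton => simp at heven
  | cons_cons σ τ l ih _ =>
    rw [List.prod_cons, List.prod_cons, ← mul_assoc]
    refine H.mul_mem (h σ τ (hswap σ (by simp)) (hswap τ (by simp))) (ih ?_ ?_)
    · exact fun ρ hρ => hswap ρ (by simp [hρ])
    · simpa [Nat.even_add_one] using heven

section

variable {H : Subgroup (Perm ℤ)}

theorem threeCycleAt_mem_of_addRight_mem {k : ℤ} (hk : 0 < k) (hshift : Equiv.addRight k ∈ H)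
    (hcyc : ∀ j ∈ Set.Icc 1 k, threeCycleAt j ∈ H) (x : ℤ) : threeCycleAt x ∈ H := by
  have hj : (x - 1) % k + 1 ∈ Set.Icc 1 k :=
    ⟨by linarith [Int.emod_nonneg (x - 1) hk.ne'], by linarith [Int.emod_lt_of_pos (x - 1) hk]⟩
  have hx : (x - 1) % k + 1 + (x - 1) / k * k = x := by
    linarith [Int.emod_add_mul_ediv (x - 1) k]
  have hpow : Equiv.addRight ((x - 1) / k * k) ∈ H := by
    rw [← smul_eq_mul, ← zsmul_addRight]; exact H.zpow_mem hshift _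
  rw [← hx, ← addRight_mul_threeCycleAt_mul_inv]
  exact H.mul_mem (H.mul_mem hpow (hcyc _ hj)) (H.inv_mem hpow)

-- All transpositions lie in the right coset `H * swap 0 1`.
theorem swap_add_one_mul_swap_zero_one_mem (hcyc : ∀ x, threeCycleAt x ∈ H) (x : ℤ) :
    swap x (x + 1) * swap 0 1 ∈ H := by
  induction x using Int.induction_on with
  | zero => simp
  | succ n ih =>
    rw [← threeCycleAt_mul_swap_add_one_add_two] at ih
    rw [add_assoc, one_add_one_eq_two, ← inv_mul_cancel_left (threeCycleAt n) (_ * _)]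
    exact H.mul_mem (H.inv_mem (hcyc n)) ih
  | pred n ih =>
    rw [← threeCycleAt_mul_swap_add_one_add_two]
    refine H.mul_mem (hcyc _) ?_
    convert ih using 3 <;> ring

theorem swap_mul_swap_zero_one_mem (hcyc : ∀ x, threeCycleAt x ∈ H) {a b : ℤ} (hab : a ≠ b) :
    swap a b * swap 0 1 ∈ H := by
  wlog hlt : a < b generalizing a b
  · rw [swap_comm]; exact this hab.symm (by omega)
  induction b, Int.add_one_le_of_lt hlt using Int.leInduction with
  | base => exact swap_add_one_mul_swap_zero_one_mem hcyc a
  | succ b hb ih =>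
    have hconj : swap a (b + 1) = swap b (b + 1) * swap a b * swap b (b + 1) := by
      simpa [swap_apply_of_ne_of_ne (show a ≠ b by omega) (show a ≠ b + 1 by omega)] using
        swap_apply_apply (swap b (b + 1)) a b
    have hprod : swap a (b + 1) * swap 0 1 = swap b (b + 1) * swap 0 1 *
        (swap a b * swap 0 1)⁻¹ * (swap b (b + 1) * swap 0 1) := by
      simp [hconj, mul_assoc]
    have hs := swap_add_one_mul_swap_zero_one_mem hcyc b
    rw [hprod]
    exact H.mul_mem (H.mul_mem hs (H.inv_mem (ih (by omega) (by omega)))) hs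

theorem swap_mul_swap_mem (hcyc : ∀ x, threeCycleAt x ∈ H) {σ τ : Perm ℤ} (hσ : σ.IsSwap)
    (hτ : τ.IsSwap) : σ * τ ∈ H := by
  obtain ⟨a, b, hab, rfl⟩ := hσ
  obtain ⟨c, d, hcd, rfl⟩ := hτ
  have hprod : swap a b * swap c d = swap a b * swap 0 1 * (swap c d * swap 0 1)⁻¹ := by
    simp [mul_assoc]
  rw [hprod]
  exact H.mul_mem (swap_mul_swap_zero_one_mem hcyc hab)
    (H.inv_mem (swap_mul_swap_zero_one_mem hcyc hcd))

theorem altGroup_le_of_addRight_mem {k : ℤ} (hk : 0 < k) (hshift : Equiv.addRight k ∈ H)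
    (hcyc : ∀ j ∈ Set.Icc 1 k, threeCycleAt j ∈ H) : AltGroup ℤ ≤ H :=
  altGroup_le_of_swap_mul_swap_mem fun _ _ =>
    swap_mul_swap_mem (threeCycleAt_mem_of_addRight_mem hk hshift hcyc)

end

/-- Let `t ∈ Sym(ℤ)` be the translation `z ↦ z + 1` and `k ≥ 3`. The subgroup
`⟨Alt(ℤ), t^k⟩` of `Sym(ℤ)` is generated by `Alt({1, …, 2k}) ∪ {t^k}`, where
`Alt({1, …, 2k})` consists of the even finitary permutations supported on
`{1, …, 2k}`. -/
theorem closure_alt_pow_eq (k : ℕ) (hk : 3 ≤ k) :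
    Subgroup.closure ((AltGroup ℤ : Set (Equiv.Perm ℤ)) ∪ {Equiv.addRight (1 : ℤ) ^ k}) =
      Subgroup.closure ({g : Equiv.Perm ℤ | g ∈ AltGroup ℤ ∧
          ∀ x : ℤ, g x ≠ x → x ∈ Set.Icc (1 : ℤ) (2 * k)} ∪
        {Equiv.addRight (1 : ℤ) ^ k}) := by
  refine le_antisymm ((Subgroup.closure_le _).2 (Set.union_subset ?_ ?_))
    (Subgroup.closure_mono (Set.union_subset_union_left _ fun g hg => hg.1))
  · refine altGroup_le_of_addRight_mem (k := k) (by omega) ?_ fun j hj => ?_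
    · rw [← nsmul_one, ← nsmul_addRight]
      exact Subgroup.subset_closure (Or.inr rfl)
    · refine Subgroup.subset_closure (Or.inl ⟨threeCycleAt_mem_altGroup j, fun y hy => ?_⟩)
      have hy' := mem_Icc_of_threeCycleAt_apply_ne hy
      simp only [Set.mem_Icc] at hj hy' ⊢
      omega
  · exact Set.singleton_subset_iff.2 (Subgroup.subset_closure (Or.inr rfl))
end

section
/- Let G be a group, N ⊴ G a normal subgroup with G/N abelian, and suppose G is generated by N together with elements s₂, …, s_n whose images in G/N are a basis of a free abelian group with presentation ⟨t₂,…,t_n | [t_i,t_j]⟩. If φ : G → {±1} is a homomorphism-like sign function trivial on N, then any element of ⟨s₂,…,s_n⟩ ∩ N lying in the kernel of the quotient map is a product of conjugates of commutators [s_i^{±1}, s_j^{±1}]; consequently, if all commutators [s_i, s_j] lie in a normal subgroup A ≤ N, then ⟨s₂,…,s_n⟩ ∩ N ≤ A·[N,N]. Concretely: in FSym(X) ⋊ ℤ^{n-1} form, if all [g_i^{c_i}, g_j^{c_j}] are even permutations, then every finitary permutation in ⟨g_2^{c_2},…,g_n^{c_n}⟩ is even. -/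
/-- The generator `g_k` (for `k ≠ 0`) of Houghton's group `H_n`, acting on `Fin n × ℕ`
(rays indexed `0, …, n-1`, ray `0` playing the role of ray `1` in the paper, and
points on each ray indexed from `0`): it translates ray `0` up by one, translates
ray `k` down by one, and sends the bottom point of ray `k` to the bottom point of
ray `0`. -/
def houghtonGen (n : ℕ) [NeZero n] (k : Fin n) (hk : k ≠ 0) : Equiv.Perm (Fin n × ℕ) where
  toFun p :=
    if p.1 = 0 then ((0 : Fin n), p.2 + 1)
    else if p.1 = k then (if p.2 = 0 then ((0 : Fin n), 0) else (k, p.2 - 1))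
    else p
  invFun p :=
    if p.1 = 0 then (if p.2 = 0 then (k, 0) else ((0 : Fin n), p.2 - 1))
    else if p.1 = k then (k, p.2 + 1)
    else p
  left_inv := by
    rintro ⟨i, m⟩
    by_cases h0 : i = 0
    · subst h0; simp
    · by_cases hik : i = k
      · subst hik
        rcases m with _ | m
        · simp [hk]
        · simp [hk]
      · simp [h0, hik]
  right_inv := by
    rintro ⟨i, m⟩
    by_cases h0 : i = 0
    · subst h0
      rcases m with _ | m
      · simp [hk]
      · simp
    · by_cases hik : i = k
      · subst hik; simp [hk]
      · simp [h0, hik]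

/-
Modulo `Alt`, the generators `s_i = g_i ^ c_i` commute, so every `h ∈ ⟨s_i⟩` is congruent mod `Alt`
to `∏ s_i ^ a_i` for an exponent vector `a`, which can be tracked together with `h` along the
closure. Such an `h` eventually translates ray `i ≠ 0` by `-a_i c_i`; if `h` is finitary these
translations vanish, so `a = 0` and `h ∈ Alt`.
-/

open Equiv Filter

instance altGroup_normal (X : Type*) [DecidableEq X] : (AltGroup X).Normal where
  conj_mem := by
    rintro a ⟨l, hswap, heven, rfl⟩ g
    refine ⟨l.map (MulAut.conj g), ?_, by simpa using heven, (map_list_prod (MulAut.conj g) l)⟩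
    simp only [List.mem_map, forall_exists_index, and_imp, forall_apply_eq_imp_iff₂]
    intro τ hτ
    obtain ⟨x, y, hxy, rfl⟩ := hswap τ hτ
    exact ⟨g x, g y, g.injective.ne hxy, (swap_apply_apply g x y).symm⟩

theorem QuotientGroup.commute_mk_of_inv_mul_inv_mul_mul_mem {G : Type*} [Group G]
    {N : Subgroup G} [N.Normal] {a b : G} (h : a⁻¹ * b⁻¹ * a * b ∈ N) :
    Commute (a : G ⧸ N) (b : G ⧸ N) := by
  rw [← QuotientGroup.eq_one_iff] at h
  simp only [QuotientGroup.mk_mul, QuotientGroup.mk_inv] at h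
  calc (a : G ⧸ N) * b = b * a * ((a : G ⧸ N)⁻¹ * (b : G ⧸ N)⁻¹ * a * b) := by group
    _ = b * a := by rw [h, mul_one]

theorem Subgroup.exists_prod_mem_of_mem_closure_range {G H κ : Type*} [Group G] [Group H]
    (K : Subgroup (G × H)) (s : κ → G) (t : κ → H) (hK : ∀ k, (s k, t k) ∈ K) {g : G}
    (hg : g ∈ closure (Set.range s)) : ∃ x, (g, x) ∈ K := by
  have hrange : Set.range s = MonoidHom.fst G H '' Set.range fun k => (s k, t k) := by
    rw [← Set.range_comp]; rfl
  rw [hrange, ← MonoidHom.map_closure] at hg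
  obtain ⟨⟨g, x⟩, hgx, rfl⟩ := hg
  exact ⟨x, closure_le K |>.2 (Set.range_subset_iff.2 hK) hgx⟩

/-- The witness `a` is an exponent vector with `g ≡ ∏ k, s k ^ a k` modulo `N`, chosen
compatibly with `K`. -/
theorem QuotientGroup.exists_coeffs_of_mem_closure_range {G κ : Type*} [Group G] [Fintype κ]
    [DecidableEq κ] {N : Subgroup G} [N.Normal] {s : κ → G}
    (hs : Pairwise fun i j => Commute (s i : G ⧸ N) (s j))
    (K : Subgroup (G × (κ → Multiplicative ℤ)))
    (hK : ∀ k, (s k, Pi.mulSingle k (Multiplicative.ofAdd 1)) ∈ K) {g : G}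
    (hg : g ∈ Subgroup.closure (Set.range s)) : ∃ a, (g, a) ∈ K ∧ (a = 1 → g ∈ N) := by
  let ψ : (κ → Multiplicative ℤ) →* G ⧸ N :=
    MonoidHom.noncommPiCoprod (fun k => zpowersHom _ (s k : G ⧸ N))
      fun i j hij x y => (hs hij).zpow_zpow _ _
  let L := K ⊓ ((QuotientGroup.mk' N).comp (MonoidHom.fst _ _)).eqLocus
    (ψ.comp (MonoidHom.snd _ _))
  obtain ⟨a, haK, hψ : (g : G ⧸ N) = ψ a⟩ : ∃ a, (g, a) ∈ L := by
    refine Subgroup.exists_prod_mem_of_mem_closure_range L s _ (fun k => ⟨hK k, ?_⟩) hg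
    show (s k : G ⧸ N) = ψ (Pi.mulSingle k (Multiplicative.ofAdd 1))
    exact ((MonoidHom.noncommPiCoprod_mulSingle _ k _).trans (by simp)).symm
  refine ⟨a, haK, fun ha => ?_⟩
  rw [← QuotientGroup.eq_one_iff, hψ, ha, map_one]

section EventuallyShiftsRay

variable {ι : Type*}

def EventuallyShiftsRay (h : Perm (ι × ℕ)) (i : ι) (t : ℤ) : Prop :=
  ∀ᶠ m : ℕ in atTop, (h (i, m)).1 = i ∧ ((h (i, m)).2 : ℤ) = m + t

variable {g h : Perm (ι × ℕ)} {i : ι} {s t : ℤ}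

theorem EventuallyShiftsRay.one : EventuallyShiftsRay (1 : Perm (ι × ℕ)) i 0 :=
  Eventually.of_forall fun _ => ⟨rfl, by simp⟩

theorem EventuallyShiftsRay.mul (hg : EventuallyShiftsRay g i s)
    (hh : EventuallyShiftsRay h i t) : EventuallyShiftsRay (g * h) i (s + t) := by
  have htend : Tendsto (fun m => (h (i, m)).2) atTop atTop := by
    rw [← tendsto_natCast_atTop_iff (R := ℤ)]
    exact (tendsto_atTop_add_const_right _ t tendsto_natCast_atTop_atTop).congr'
      (hh.mono fun m hm => hm.2.symm)
  filter_upwards [hh, htend.eventually hg] with m ⟨hray, hm⟩ ⟨hray', hm'⟩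
  rw [Perm.mul_apply, show h (i, m) = (i, (h (i, m)).2) from Prod.ext hray rfl]
  exact ⟨hray', by rw [hm', hm]; ring⟩

theorem EventuallyShiftsRay.inv (hh : EventuallyShiftsRay h i t) :
    EventuallyShiftsRay h⁻¹ i (-t) := by
  have htend : Tendsto (fun m : ℕ => ((m : ℤ) - t).toNat) atTop atTop :=
    tendsto_atTop_atTop.2 fun b => ⟨b + t.toNat, fun m hm => by omega⟩
  filter_upwards [htend.eventually hh, eventually_ge_atTop t.toNat] with m ⟨hray, hm⟩ hmt
  have hpre : h (i, ((m : ℤ) - t).toNat) = (i, m) := Prod.ext hray (by omega)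
  rw [← hpre, Perm.coe_inv, symm_apply_apply]
  exact ⟨rfl, by omega⟩

theorem EventuallyShiftsRay.eq_zero_of_finite (hfin : {p | h p ≠ p}.Finite)
    (hh : EventuallyShiftsRay h i t) : t = 0 := by
  have hfix : ∀ᶠ m : ℕ in atTop, h (i, m) = (i, m) := by
    rw [← Nat.cofinite_eq_atTop]
    exact eventually_cofinite.2 (hfin.preimage (Prod.mk_right_injective i).injOn)
  obtain ⟨m, ⟨-, hm⟩, hfix⟩ := (hh.and hfix).exists
  rw [hfix] at hm
  omega

end EventuallyShiftsRay

def rayShiftGraph {κ ι : Type*} (r : κ → ι) (w : κ → ℤ) :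
    Subgroup (Perm (ι × ℕ) × (κ → Multiplicative ℤ)) where
  carrier := {p | ∀ k, EventuallyShiftsRay p.1 (r k) (w k * (p.2 k).toAdd)}
  one_mem' k := by simpa using EventuallyShiftsRay.one
  mul_mem' hp hq k := by simpa [mul_add] using (hp k).mul (hq k)
  inv_mem' hp k := by simpa using (hp k).inv

section Houghton

variable {n : ℕ} [NeZero n] {j : Fin n} (hj : j ≠ 0)

theorem houghtonGen_apply_of_ne {i : Fin n} (hi : i ≠ 0) (hij : i ≠ j) (m : ℕ) :
    houghtonGen n j hj (i, m) = (i, m) := by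
  simp [houghtonGen, hi, hij]

theorem houghtonGen_apply_succ (m : ℕ) : houghtonGen n j hj (j, m + 1) = (j, m) := by
  simp [houghtonGen, hj]

theorem houghtonGen_pow_apply_of_ne {i : Fin n} (hi : i ≠ 0) (hij : i ≠ j) (t m : ℕ) :
    (houghtonGen n j hj ^ t) (i, m) = (i, m) := by
  induction t with
  | zero => rfl
  | succ t ih => rw [pow_succ, Perm.mul_apply, houghtonGen_apply_of_ne hj hi hij, ih]

theorem houghtonGen_pow_apply_add (t m : ℕ) : (houghtonGen n j hj ^ t) (j, m + t) = (j, m) := by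
  induction t with
  | zero => rfl
  | succ t ih => rw [pow_succ, Perm.mul_apply, ← add_assoc, houghtonGen_apply_succ, ih]

theorem eventuallyShiftsRay_houghtonGen_pow_self (t : ℕ) :
    EventuallyShiftsRay (houghtonGen n j hj ^ t) j (-t) := by
  filter_upwards [eventually_ge_atTop t] with m hm
  obtain ⟨m, rfl⟩ := Nat.exists_eq_add_of_le' hm
  simp [houghtonGen_pow_apply_add]

theorem eventuallyShiftsRay_houghtonGen_pow_of_ne {i : Fin n} (hi : i ≠ 0) (hij : i ≠ j)
    (t : ℕ) : EventuallyShiftsRay (houghtonGen n j hj ^ t) i 0 :=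
  Eventually.of_forall fun m => by simp [houghtonGen_pow_apply_of_ne hj hi hij]

end Houghton

theorem houghtonGen_pow_mem_rayShiftGraph {n : ℕ} [NeZero n] (c : Fin n → ℕ)
    (k : {i : Fin n // i ≠ 0}) :
    (houghtonGen n k k.2 ^ c k, Pi.mulSingle k (Multiplicative.ofAdd 1)) ∈
      rayShiftGraph Subtype.val fun i => -(c i : ℤ) := by
  intro i
  rcases eq_or_ne i k with rfl | hik
  · simpa using eventuallyShiftsRay_houghtonGen_pow_self i.2 (c i)
  · simpa [hik] using
      eventuallyShiftsRay_houghtonGen_pow_of_ne k.2 i.2 (Subtype.coe_ne_coe.2 hik) (c k)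

theorem finitary_in_closure_even_general (n : ℕ) [NeZero n] (c : Fin n → ℕ)
    (hc : ∀ i, 0 < c i)
    (hcomm : ∀ (i j : Fin n) (hi : i ≠ 0) (hj : j ≠ 0),
      (houghtonGen n i hi ^ c i)⁻¹ * (houghtonGen n j hj ^ c j)⁻¹ *
          houghtonGen n i hi ^ c i * houghtonGen n j hj ^ c j ∈ AltGroup (Fin n × ℕ)) :
    ∀ h ∈ Subgroup.closure {x : Equiv.Perm (Fin n × ℕ) |
        ∃ (i : Fin n) (hi : i ≠ 0), x = houghtonGen n i hi ^ c i},
      {p : Fin n × ℕ | h p ≠ p}.Finite → h ∈ AltGroup (Fin n × ℕ) := by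
  intro h hh hfin
  let s : {i : Fin n // i ≠ 0} → Perm (Fin n × ℕ) := fun i => houghtonGen n i i.2 ^ c i
  have hrange : {x | ∃ (i : Fin n) (hi : i ≠ 0), x = houghtonGen n i hi ^ c i} = Set.range s :=
    Set.ext fun x => ⟨fun ⟨i, hi, hx⟩ => ⟨⟨i, hi⟩, hx.symm⟩, fun ⟨i, hx⟩ => ⟨i, i.2, hx.symm⟩⟩
  obtain ⟨a, hshift, hmem⟩ := QuotientGroup.exists_coeffs_of_mem_closure_range (s := s)
    (fun i j _ => QuotientGroup.commute_mk_of_inv_mul_inv_mul_mul_mem (hcomm i j i.2 j.2))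
    _ (houghtonGen_pow_mem_rayShiftGraph c) (hrange ▸ hh)
  exact hmem <| funext fun i => by
    simpa [(hc i).ne'] using (hshift i).eq_zero_of_finite hfin

/-- (Houghton groups, `n ≥ 3`, rays indexed by `Fin n` with ray `0` the distinguished
ray and `c : Fin n → ℕ` positive.) If `[g_i^{c_i}, g_j^{c_j}] ∈ Alt(X_n)` for all
`i, j ≠ 0`, then every finitary permutation in `⟨g_i^{c_i} : i ≠ 0⟩` is even, i.e.
`⟨g_i^{c_i} : i ≠ 0⟩ ∩ FSym(X_n) ≤ Alt(X_n)`. -/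
theorem finitary_in_closure_even (n : ℕ) [NeZero n] (hn : 3 ≤ n) (c : Fin n → ℕ)
    (hc : ∀ i, 0 < c i)
    (hcomm : ∀ (i j : Fin n) (hi : i ≠ 0) (hj : j ≠ 0),
      (houghtonGen n i hi ^ c i)⁻¹ * (houghtonGen n j hj ^ c j)⁻¹ *
          houghtonGen n i hi ^ c i * houghtonGen n j hj ^ c j ∈ AltGroup (Fin n × ℕ)) :
    ∀ h ∈ Subgroup.closure {x : Equiv.Perm (Fin n × ℕ) |
        ∃ (i : Fin n) (hi : i ≠ 0), x = houghtonGen n i hi ^ c i},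
      {p : Fin n × ℕ | h p ≠ p}.Finite → h ∈ AltGroup (Fin n × ℕ) :=
  finitary_in_closure_even_general n c hc hcomm
end

section
/- In the Houghton group H_n (n ≥ 3), for i ≠ j and positive integers c_i, c_j, the commutator [g_i^{c_i}, g_j^{c_j}] is an odd finitary permutation if and only if both c_i and c_j are odd. -/
namespace Equiv.Perm

variable {α X : Type*} [DecidableEq α] [Fintype α] [DecidableEq X]

theorem exists_map_ofSubtype_eq_of_isSwap {p : X → Prop} [DecidablePred p]
    {l : List (Perm X)} (hswap : ∀ τ ∈ l, τ.IsSwap) (hp : ∀ τ ∈ l, ∀ x, τ x ≠ x → p x) :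
    ∃ l' : List (Perm (Subtype p)), (∀ τ ∈ l', τ.IsSwap) ∧ l'.map ofSubtype = l := by
  induction l with
  | nil => exact ⟨[], by simp, rfl⟩
  | cons τ l ih =>
    obtain ⟨l', hl'swap, hl'⟩ := ih (fun σ hσ => hswap σ (.tail _ hσ))
      (fun σ hσ => hp σ (.tail _ hσ))
    obtain ⟨a, b, hab, rfl⟩ := hswap τ (.head _)
    have hpa : p a := hp _ (.head _) a (by simp [swap_apply_left, hab.symm])
    have hpb : p b := hp _ (.head _) b (by simp [swap_apply_right, hab])
    refine ⟨swap ⟨a, hpa⟩ ⟨b, hpb⟩ :: l', ?_, by simp [hl']⟩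
    rintro σ (_ | ⟨_, hσ⟩)
    exacts [⟨_, _, fun h => hab (congrArg Subtype.val h), rfl⟩, hl'swap σ hσ]

theorem even_length_of_prod_eq_one {l : List (Perm X)} (hswap : ∀ τ ∈ l, τ.IsSwap)
    (h : l.prod = 1) : Even l.length := by
  classical
  let S : Set X := {x | ∃ τ ∈ l, τ x ≠ x}
  have hS : S.Finite := by
    refine (l.finite_toSet.biUnion fun τ hτ => ?_).subset fun x ⟨τ, hτ, hx⟩ =>
      Set.mem_biUnion hτ hx
    obtain ⟨a, b, -, rfl⟩ := hswap τ hτ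
    exact (Set.toFinite {a, b}).subset fun x hx => by
      simpa using (swap_apply_ne_self_iff.mp hx).2
  have := hS.fintype
  obtain ⟨l', hl'swap, hl'⟩ :=
    exists_map_ofSubtype_eq_of_isSwap (p := (· ∈ S)) hswap fun τ hτ x hx => ⟨τ, hτ, hx⟩
  have hprod : l'.prod = 1 := ofSubtype_injective (by rwa [map_list_prod, map_one, hl'])
  have hsign := sign_prod_list_swap hl'swap
  rw [hprod, map_one, eq_comm, neg_one_pow_eq_one_iff_even (by decide)] at hsign
  simpa [← hl'] using hsign

theorem isOddPerm_map_iff (φ : Perm α →* Perm X)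
    (hφ : ∀ σ : Perm α, σ.IsSwap → (φ σ).IsSwap) (σ : Perm α) :
    IsOddPerm (φ σ) ↔ sign σ = -1 := by
  have decompose : ∀ τ : Perm α, ∃ l : List (Perm X), (∀ ρ ∈ l, ρ.IsSwap) ∧
      l.prod = φ τ ∧ sign τ = (-1) ^ l.length := fun τ => by
    obtain ⟨l, hprod, hswap⟩ := (truncSwapFactors τ).out
    refine ⟨l.map φ, by simpa using fun ρ hρ => hφ ρ (hswap ρ hρ), ?_, ?_⟩
    · rw [← map_list_prod, hprod]
    · rw [← hprod, sign_prod_list_swap hswap, List.length_map]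
  constructor
  · rintro ⟨l, hswap, hodd, hprod⟩
    obtain ⟨L, hLswap, hLprod, hLsign⟩ := decompose σ⁻¹
    have heven : Even (l ++ L).length := even_length_of_prod_eq_one
      (fun ρ hρ => (List.mem_append.mp hρ).elim (hswap ρ) (hLswap ρ))
      (by rw [List.prod_append, ← hprod, hLprod, map_inv, mul_inv_cancel])
    rw [← sign_inv, hLsign, neg_one_pow_eq_neg_one_iff_odd (by decide)]
    rw [List.length_append] at heven
    grind
  · intro hσ
    obtain ⟨L, hLswap, hLprod, hLsign⟩ := decompose σ
    rw [hσ, eq_comm, neg_one_pow_eq_neg_one_iff_odd (by decide)] at hLsign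
    exact ⟨L, hLswap, hLsign, hLprod.symm⟩

theorem swap_viaFintypeEmbedding (f : α ↪ X) (a b : α) :
    (swap a b).viaFintypeEmbedding f = swap (f a) (f b) := by
  ext x
  by_cases hx : x ∈ Set.range f
  · obtain ⟨c, rfl⟩ := hx
    rw [viaFintypeEmbedding_apply_image, swap_apply_def, swap_apply_def]
    simp only [f.injective.eq_iff]
    split_ifs <;> rfl
  · rw [viaFintypeEmbedding_apply_notMem_range _ _ hx, swap_apply_of_ne_of_ne]
    exacts [fun h => hx ⟨a, h.symm⟩, fun h => hx ⟨b, h.symm⟩]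

theorem isOddPerm_viaFintypeEmbedding_iff (σ : Perm α) (f : α ↪ X) :
    IsOddPerm (σ.viaFintypeEmbedding f) ↔ sign σ = -1 :=
  isOddPerm_map_iff (extendDomainHom f.toEquivRange) (fun _ ⟨a, b, hab, h⟩ =>
    ⟨f a, f b, f.injective.ne hab, h ▸ swap_viaFintypeEmbedding f a b⟩) σ

theorem sign_finRotate_pow_eq_neg_one_iff (N k : ℕ) :
    sign (finRotate N ^ k) = -1 ↔ Odd (N - 1) ∧ Odd k := by
  rw [map_pow, sign_finRotate, ← pow_mul, neg_one_pow_eq_neg_one_iff_odd (by decide),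
    Nat.odd_mul]

end Equiv.Perm

theorem finRotate_pow_apply_val {N : ℕ} (k : ℕ) (t : Fin N) :
    ((finRotate N ^ k) t : ℕ) = (t + k) % N := by
  induction k with
  | zero => simp [Nat.mod_eq_of_lt t.isLt]
  | succ k ih =>
    have := t.neZero
    rw [pow_succ', Equiv.Perm.mul_apply, finRotate_apply, Fin.val_add, ih, Fin.val_one',
      Nat.add_mod_mod, Nat.mod_add_mod, add_assoc]

section RaySegments

variable {n : ℕ} {i j : Fin n} (hij : i ≠ j) (a b : ℕ)

def raySegmentsEmbedding : Fin (a + b) ↪ Fin n × ℕ where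
  toFun t := if (t : ℕ) < a then (i, (t : ℕ)) else (j, (t : ℕ) - a)
  inj' s t hst := by
    simp only at hst
    split_ifs at hst <;> simp [Prod.ext_iff, hij, hij.symm] at hst <;> omega

theorem raySegmentsEmbedding_apply (t : Fin (a + b)) :
    raySegmentsEmbedding hij a b t = if (t : ℕ) < a then (i, (t : ℕ)) else (j, (t : ℕ) - a) :=
  rfl

theorem mem_range_raySegmentsEmbedding (r : Fin n) (m : ℕ) :
    (r, m) ∈ Set.range (raySegmentsEmbedding hij a b) ↔ r = i ∧ m < a ∨ r = j ∧ m < b := by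
  constructor
  · rintro ⟨t, h⟩
    have := t.isLt
    rw [raySegmentsEmbedding_apply] at h
    split_ifs at h <;> simp only [Prod.mk.injEq] at h <;> omega
  · rintro (⟨rfl, hm⟩ | ⟨rfl, hm⟩)
    · exact ⟨⟨m, by omega⟩, by simp [raySegmentsEmbedding_apply, hm]⟩
    · exact ⟨⟨a + m, by omega⟩, by simp [raySegmentsEmbedding_apply]⟩

end RaySegments

section Houghton

variable {n : ℕ} [NeZero n] {k : Fin n} (hk : k ≠ 0)

theorem houghtonGen_pow_apply_zero (c m : ℕ) :
    (houghtonGen n k hk ^ c) (0, m) = (0, m + c) := by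
  induction c generalizing m with
  | zero => rfl
  | succ c ih =>
    rw [pow_succ, Equiv.Perm.mul_apply, show houghtonGen n k hk (0, m) = (0, m + 1) by
      simp [houghtonGen], ih, add_right_comm, add_assoc]

theorem houghtonGen_pow_apply_self (c m : ℕ) :
    (houghtonGen n k hk ^ c) (k, m) = if m < c then (0, c - 1 - m) else (k, m - c) := by
  induction c generalizing m with
  | zero => simp
  | succ c ih =>
    rw [pow_succ, Equiv.Perm.mul_apply]
    rcases m with _ | m
    · rw [show houghtonGen n k hk (k, 0) = (0, 0) by simp [houghtonGen, hk],
        houghtonGen_pow_apply_zero]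
      simp
    · rw [show houghtonGen n k hk (k, m + 1) = (k, m) by simp [houghtonGen, hk], ih]
      split_ifs <;> simp <;> omega

theorem houghtonGen_pow_apply_self_of_lt {c m : ℕ} (h : m < c) :
    (houghtonGen n k hk ^ c) (k, m) = (0, c - 1 - m) := by
  rw [houghtonGen_pow_apply_self, if_pos h]

theorem houghtonGen_pow_apply_self_of_le {c m : ℕ} (h : c ≤ m) :
    (houghtonGen n k hk ^ c) (k, m) = (k, m - c) := by
  rw [houghtonGen_pow_apply_self, if_neg h.not_gt]

theorem houghtonGen_pow_apply_of_ne_s16 {r : Fin n} (hr0 : r ≠ 0) (hrk : r ≠ k) (c m : ℕ) :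
    (houghtonGen n k hk ^ c) (r, m) = (r, m) :=
  Equiv.Perm.pow_apply_eq_self_of_apply_eq_self (by simp [houghtonGen, hr0, hrk]) c

end Houghton

section Commutator

variable {n : ℕ} [NeZero n] {i j : Fin n} (hi : i ≠ 0) (hj : j ≠ 0) (hij : i ≠ j) (a b : ℕ)

theorem houghtonGen_pow_apply_raySegmentsEmbedding (t : Fin (a + b)) :
    (houghtonGen n i hi ^ a) ((houghtonGen n j hj ^ b) (raySegmentsEmbedding hij a b t)) =
      (houghtonGen n j hj ^ b) ((houghtonGen n i hi ^ a)
        (raySegmentsEmbedding hij a b ((finRotate (a + b) ^ b) t))) := by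
  have ht := t.isLt
  have hji := hij.symm
  have hrot : ((t : ℕ) + b) % (a + b) = if (t : ℕ) < a then t + b else t - a := by
    split_ifs
    · exact Nat.mod_eq_of_lt (by omega)
    · rw [Nat.mod_eq_sub_mod (by omega), Nat.mod_eq_of_lt (by omega)]
      omega
  simp only [raySegmentsEmbedding_apply, finRotate_pow_apply_val, hrot]
  split_ifs <;> simp (disch := first | omega | assumption) [houghtonGen_pow_apply_self_of_lt,
    houghtonGen_pow_apply_zero, houghtonGen_pow_apply_of_ne_s16] <;> omega

theorem houghtonGen_pow_apply_comm_of_notMem_range {x : Fin n × ℕ}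
    (hx : x ∉ Set.range (raySegmentsEmbedding hij a b)) :
    (houghtonGen n i hi ^ a) ((houghtonGen n j hj ^ b) x) =
      (houghtonGen n j hj ^ b) ((houghtonGen n i hi ^ a) x) := by
  obtain ⟨r, m⟩ := x
  have hji := hij.symm
  simp only [mem_range_raySegmentsEmbedding, not_or, not_and, not_lt] at hx
  obtain ⟨hai, hbj⟩ := hx
  rcases eq_or_ne r 0 with rfl | hr0
  · simp only [houghtonGen_pow_apply_zero, add_right_comm]
  rcases eq_or_ne r i with rfl | hri
  · simp (disch := first | omega | assumption) [houghtonGen_pow_apply_self_of_le,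
      houghtonGen_pow_apply_of_ne_s16]
  rcases eq_or_ne r j with rfl | hrj
  · simp (disch := first | omega | assumption) [houghtonGen_pow_apply_self_of_le,
      houghtonGen_pow_apply_of_ne_s16]
  simp only [houghtonGen_pow_apply_of_ne_s16 _ hr0 hri, houghtonGen_pow_apply_of_ne_s16 _ hr0 hrj]

theorem houghtonGen_pow_commutator :
    (houghtonGen n i hi ^ a)⁻¹ * (houghtonGen n j hj ^ b)⁻¹ * houghtonGen n i hi ^ a *
        houghtonGen n j hj ^ b =
      (finRotate (a + b) ^ b).viaFintypeEmbedding (raySegmentsEmbedding hij a b) := by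
  set A := houghtonGen n i hi ^ a
  set B := houghtonGen n j hj ^ b
  set σ := (finRotate (a + b) ^ b).viaFintypeEmbedding (raySegmentsEmbedding hij a b)
  -- Comparing `A * B` with `B * A * σ` avoids computing inverses.
  have hAB : A * B = B * A * σ := by
    ext x : 1
    simp only [Equiv.Perm.mul_apply]
    by_cases hx : x ∈ Set.range (raySegmentsEmbedding hij a b)
    · obtain ⟨t, rfl⟩ := hx
      rw [Equiv.Perm.viaFintypeEmbedding_apply_image]
      exact houghtonGen_pow_apply_raySegmentsEmbedding hi hj hij a b t
    · rw [Equiv.Perm.viaFintypeEmbedding_apply_notMem_range _ _ hx]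
      exact houghtonGen_pow_apply_comm_of_notMem_range hi hj hij a b hx
  calc A⁻¹ * B⁻¹ * A * B = (B * A)⁻¹ * (A * B) := by group
    _ = σ := by rw [hAB]; group

end Commutator

theorem houghton_commutator_odd_iff_general (n : ℕ) [NeZero n]
    (i j : Fin n) (hi : i ≠ 0) (hj : j ≠ 0) (hij : i ≠ j) (ci cj : ℕ) :
    IsOddPerm ((houghtonGen n i hi ^ ci)⁻¹ * (houghtonGen n j hj ^ cj)⁻¹ *
        houghtonGen n i hi ^ ci * houghtonGen n j hj ^ cj) ↔
      Odd ci ∧ Odd cj := by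
  rw [houghtonGen_pow_commutator hi hj hij, Equiv.Perm.isOddPerm_viaFintypeEmbedding_iff,
    Equiv.Perm.sign_finRotate_pow_eq_neg_one_iff]
  simp only [Nat.odd_iff]
  omega

/-- In the Houghton group `H_n` (`n ≥ 3`), for distinct `i, j ≠ 0` and positive
integers `c_i, c_j`, the commutator `[g_i^{c_i}, g_j^{c_j}]` is an odd finitary
permutation if and only if both `c_i` and `c_j` are odd. -/
theorem houghton_commutator_odd_iff (n : ℕ) [NeZero n] (hn : 3 ≤ n)
    (i j : Fin n) (hi : i ≠ 0) (hj : j ≠ 0) (hij : i ≠ j) (ci cj : ℕ)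
    (hci : 0 < ci) (hcj : 0 < cj) :
    IsOddPerm ((houghtonGen n i hi ^ ci)⁻¹ * (houghtonGen n j hj ^ cj)⁻¹ *
        houghtonGen n i hi ^ ci * houghtonGen n j hj ^ cj) ↔
      Odd ci ∧ Odd cj :=
  houghton_commutator_odd_iff_general n i j hi hj hij ci cj
end

section
/- Let X be an infinite set and A = Alt(X) the even finitary permutations. If F = ⟨FSym(X), g₂,…,g_n⟩ ≤ Sym(X) is such that all commutators of pairs of elements from {g₂,…,g_n} ∪ FSym(X) lie in Alt(X), then the commutator subgroup [F, F] equals Alt(X). -/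
/-!
`[F, F] ≤ Alt(X)` because `Alt(X)` is normal and the generators of `F` commute modulo it, so
`F` has abelian image in `Sym(X) ⧸ Alt(X)`. Conversely, two transpositions sharing a point
multiply to a commutator of transpositions, `(a b)(a c) = [(a c), (a b)]`, and any product of
two transpositions is a product of two such; since transpositions are finitary, every even
finitary permutation lies in `[FSym(X), FSym(X)] ≤ [F, F]`.
-/

open Equiv
open scoped commutatorElement

namespace Subgroup

variable {G : Type*} [Group G]

theorem commutator_closure_le_of_forall_mem {S : Set G} {N : Subgroup G} [N.Normal]
    (h : ∀ a ∈ S, ∀ b ∈ S, a⁻¹ * b⁻¹ * a * b ∈ N) : ⁅closure S, closure S⁆ ≤ N := by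
  let π := QuotientGroup.mk' N
  have hcomm : closure (π '' S) ≤ centralizer (π '' S) := by
    rw [closure_le]
    rintro _ ⟨a, ha, rfl⟩ _ ⟨b, hb, rfl⟩
    have : ⁅π a⁻¹, π b⁻¹⁆ = 1 := by
      rw [← map_commutatorElement, QuotientGroup.mk'_apply, QuotientGroup.eq_one_iff]
      simpa [commutatorElement_def] using h a ha b hb
    simpa using (commutatorElement_eq_one_iff_commute.mp this).inv_inv.eq.symm
  rw [← QuotientGroup.ker_mk' N, ← map_eq_bot_iff, map_commutator, MonoidHom.map_closure,
    commutator_eq_bot_iff_le_centralizer, centralizer_closure]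
  exact hcomm

end Subgroup

section Perm

variable {X : Type*} [DecidableEq X]

theorem swap_mem_FSym (a b : X) : swap a b ∈ FSym X :=
  (Set.toFinite {a, b}).subset fun x hx => by
    by_contra hab
    simp only [Set.mem_insert_iff, Set.mem_singleton_iff, not_or] at hab
    exact hx (swap_apply_of_ne_of_ne hab.1 hab.2)

theorem swap_mul_swap_eq_commutatorElement {a b c : X} (hab : a ≠ b) (hac : a ≠ c)
    (hbc : b ≠ c) : swap a b * swap a c = ⁅swap a c, swap a b⁆ := by
  ext x
  simp only [commutatorElement_def, swap_inv, Perm.mul_apply, swap_apply_def]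
  split_ifs <;> simp_all

theorem swap_mul_swap_mem_commutator {H : Subgroup (Perm X)} (hH : ∀ a b : X, swap a b ∈ H)
    {a b c d : X} (hab : a ≠ b) (hcd : c ≠ d) : swap a b * swap c d ∈ ⁅H, H⁆ := by
  have adjacent : ∀ {a b c : X}, a ≠ b → a ≠ c → swap a b * swap a c ∈ ⁅H, H⁆ := by
    intro a b c hab hac
    by_cases hbc : b = c
    · simp [hbc]
    rw [swap_mul_swap_eq_commutatorElement hab hac hbc]
    exact Subgroup.commutator_mem_commutator (hH a c) (hH a b)
  by_cases hac : a = c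
  · exact hac ▸ adjacent hab (hac ▸ hcd)
  have : swap a b * swap c d = (swap a b * swap a c) * (swap c a * swap c d) := by
    rw [swap_comm c a, mul_assoc, swap_mul_self_mul]
  rw [this]
  exact Subgroup.mul_mem _ (adjacent hab hac) (adjacent (Ne.symm hac) hcd)

theorem AltGroup.le_of_swap_mul_swap_mem {K : Subgroup (Perm X)}
    (hK : ∀ {a b c d : X}, a ≠ b → c ≠ d → swap a b * swap c d ∈ K) : AltGroup X ≤ K := by
  suffices ∀ l : List (Perm X), (∀ τ ∈ l, τ.IsSwap) → Even l.length → l.prod ∈ K by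
    rintro _ ⟨l, hl, heven, rfl⟩
    exact this l hl heven
  intro l
  induction l using List.twoStepInduction with
  | nil => exact fun _ _ => K.one_mem
  | singleton => simp
  | cons_cons σ τ l ih =>
    intro hl heven
    obtain ⟨a, b, hab, rfl⟩ := hl σ (by simp)
    obtain ⟨c, d, hcd, rfl⟩ := hl τ (by simp)
    rw [List.prod_cons, List.prod_cons, ← mul_assoc]
    exact K.mul_mem (hK hab hcd)
      (ih (fun t ht => hl t (by simp [ht])) (by simpa [Nat.even_add_one] using heven))

instance AltGroup.normal : (AltGroup X).Normal where
  conj_mem := by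
    rintro _ ⟨l, hl, heven, rfl⟩ g
    refine ⟨l.map (MulAut.conj g), ?_, by simpa using heven, map_list_prod (MulAut.conj g) l⟩
    simp only [List.mem_map]
    rintro _ ⟨_, hσ, rfl⟩
    obtain ⟨x, y, hxy, rfl⟩ := hl _ hσ
    exact ⟨g x, g y, g.injective.ne hxy, by simp [swap_apply_apply]⟩

end Perm

theorem commutator_subgroup_eq_alt_general (X : Type*) [DecidableEq X]
    (m : ℕ) (g : Fin m → Equiv.Perm X)
    (hcomm : ∀ a b : Equiv.Perm X,
      a ∈ (FSym X : Set (Equiv.Perm X)) ∪ Set.range g →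
      b ∈ (FSym X : Set (Equiv.Perm X)) ∪ Set.range g →
      a⁻¹ * b⁻¹ * a * b ∈ AltGroup X) :
    ⁅Subgroup.closure ((FSym X : Set (Equiv.Perm X)) ∪ Set.range g),
        Subgroup.closure ((FSym X : Set (Equiv.Perm X)) ∪ Set.range g)⁆ =
      AltGroup X := by
  have swap_mem (a b : X) :
      swap a b ∈ Subgroup.closure ((FSym X : Set (Perm X)) ∪ Set.range g) :=
    Subgroup.subset_closure (Or.inl (swap_mem_FSym a b))
  exact le_antisymm
    (Subgroup.commutator_closure_le_of_forall_mem fun a ha b hb => hcomm a b ha hb)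
    (AltGroup.le_of_swap_mul_swap_mem (swap_mul_swap_mem_commutator swap_mem))

/-- Let `X` be an infinite set and `g₂, …, g_n ∈ Sym(X)` (here a family `g : Fin m →
Sym(X)`). If all commutators of pairs of elements from `FSym(X) ∪ {g₂, …, g_n}` lie in
`Alt(X)`, then the commutator subgroup of `F = ⟨FSym(X), g₂, …, g_n⟩` equals `Alt(X)`. -/
theorem commutator_subgroup_eq_alt (X : Type*) [Infinite X] [DecidableEq X]
    (m : ℕ) (g : Fin m → Equiv.Perm X)
    (hcomm : ∀ a b : Equiv.Perm X,
      a ∈ (FSym X : Set (Equiv.Perm X)) ∪ Set.range g →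
      b ∈ (FSym X : Set (Equiv.Perm X)) ∪ Set.range g →
      a⁻¹ * b⁻¹ * a * b ∈ AltGroup X) :
    ⁅Subgroup.closure ((FSym X : Set (Equiv.Perm X)) ∪ Set.range g),
        Subgroup.closure ((FSym X : Set (Equiv.Perm X)) ∪ Set.range g)⁆ =
      AltGroup X :=
  commutator_subgroup_eq_alt_general X m g hcomm
end
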